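/- In every K-algebra satisfying additionally J₂¬x = ¬J₂x for all x, the set O(A) = {x : J₂x = x} contains 1 and is closed under ¬ and ∨, and the ⟨∨,¬,0,1⟩-structure on O(A) is a Boolean algebra. -/

import Mathlib

/-!
Fixed points of J₂ satisfy x ∨ ¬x = 1 by K9. On elements with this property K6 and its dual
x ∨ (¬x ∧ y) = x ∨ y give the absorption laws and the Boolean rule z ∧ ¬y = 0 → z ≤ y, and K6
alone turns a ∧ ¬((a ∧ b) ∨ (a ∧ c)) into a ∧ ¬(b ∨ c), which yields distributivity.
O(A) is closed under ∨ because K10 gives J₂(x ∨ y) ≤ x ∨ y and K11 gives x ∨ y ≤ J₂(x ∨ y);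
closure under ¬ is the extra hypothesis J₂¬x = ¬J₂x.
-/

/-- The operations of a Bochvar-type algebra ⟨A, ∨, ¬, J₂, 0, 1⟩. -/
class KOps (α : Type*) where
  sup : α → α → α
  neg : α → α
  J : α → α
  zero : α
  one : α

namespace KOps

variable {α : Type*} [KOps α]

/-- The meet, defined à la De Morgan: x ∧ y := ¬(¬x ∨ ¬y). -/
def meet (x y : α) : α := neg (sup (neg x) (neg y))

end KOps

open KOps

/-- A K-algebra: an algebra satisfying the identities K1–K12 axiomatising
the variety generated by Bochvar algebras. (K5 holds by definition of `meet`.) -/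
class KAlgebra (α : Type*) [KOps α] : Prop where
  K1 : ∀ x : α, sup x x = x
  K2 : ∀ x y : α, sup x y = sup y x
  K3 : ∀ x y z : α, sup (sup x y) z = sup x (sup y z)
  K4 : ∀ x : α, neg (neg x) = x
  K5 : ∀ x y : α, meet x y = neg (sup (neg x) (neg y))
  K6 : ∀ x y : α, meet x (sup (neg x) y) = meet x y
  K7 : ∀ x : α, sup zero x = x
  K8 : (one : α) = neg zero
  K9 : ∀ x : α, sup (J x) (neg (J x)) = one
  K10 : ∀ x y : α, sup x (J y) = sup x (J (sup x y))
  K11 : ∀ x : α, meet x (J x) = x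
  K12 : ∀ x : α, J (meet x (neg x)) = zero

namespace KAlgebra

variable {α : Type*} [KOps α] [KAlgebra α]

instance : Std.Commutative (α := α) sup := ⟨K2⟩
instance : Std.Associative (α := α) sup := ⟨K3⟩

lemma neg_injective : Function.Injective (neg : α → α) := fun x y h => by
  rw [← K4 x, h, K4]

lemma neg_one : neg (one : α) = zero := by rw [K8, K4]

lemma sup_zero (x : α) : sup x zero = x := by rw [K2, K7]

lemma neg_meet (x y : α) : neg (meet x y) = sup (neg x) (neg y) := by rw [K5, K4]

lemma meet_neg_neg (x y : α) : meet (neg x) (neg y) = neg (sup x y) := by rw [K5, K4, K4]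

lemma meet_comm (x y : α) : meet x y = meet y x := by rw [K5, K5, K2]

lemma meet_assoc (x y z : α) : meet (meet x y) z = meet x (meet y z) :=
  neg_injective (by rw [neg_meet, neg_meet, neg_meet, neg_meet, K3])

instance : Std.Commutative (α := α) meet := ⟨meet_comm⟩
instance : Std.Associative (α := α) meet := ⟨meet_assoc⟩

lemma one_meet (x : α) : meet one x = x := by
  rw [meet_comm, K5, neg_one, sup_zero, K4]

lemma sup_meet_neg (x y : α) : sup x (meet (neg x) y) = sup x y :=
  neg_injective (by
    have h := K6 (neg x) (neg y)
    rw [K4] at h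
    rw [← meet_neg_neg, neg_meet, K4, h, meet_neg_neg])

lemma sup_eq_right_of_meet_neg_eq_zero {y z : α} (h : meet z (neg y) = zero) :
    sup z y = y := by
  rw [K2, ← sup_meet_neg y z, meet_comm, h, sup_zero]

lemma meet_neg_sup_meet (a b c : α) :
    meet a (neg (sup (meet a b) (meet a c))) = meet a (neg (sup b c)) := calc
  _ = meet (meet a (sup (neg a) (neg b))) (sup (neg a) (neg c)) := by
    rw [← meet_neg_neg, neg_meet, neg_meet, meet_assoc]
  _ = meet (neg b) (meet a (sup (neg a) (neg c))) := by rw [K6]; ac_rfl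
  _ = meet a (neg (sup b c)) := by rw [K6, ← meet_neg_neg]; ac_rfl

lemma J_one : J (one : α) = one := by
  simpa only [one_meet] using K11 (one : α)

def ExcludedMiddle (x : α) : Prop := sup x (neg x) = one

lemma excludedMiddle_J (x : α) : ExcludedMiddle (J x) := K9 x

lemma excludedMiddle_of_J_eq {x : α} (h : J x = x) : ExcludedMiddle x :=
  h ▸ excludedMiddle_J x

namespace ExcludedMiddle

variable {x y z : α}

lemma neg (hx : ExcludedMiddle x) : ExcludedMiddle (KOps.neg x) := by
  rw [ExcludedMiddle, K4, K2]
  exact hx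

lemma sup_one (hx : ExcludedMiddle x) : sup x one = one := by
  rw [← hx, ← K3, K1]

lemma meet_neg_self (hx : ExcludedMiddle x) : meet x (KOps.neg x) = zero := by
  rw [K5, K4, K2, hx, neg_one]

lemma meet_zero (hx : ExcludedMiddle x) : meet x zero = zero := by
  rw [K5, ← K8, hx.neg.sup_one, neg_one]

lemma sup (hx : ExcludedMiddle x) (hy : ExcludedMiddle y) :
    ExcludedMiddle (KOps.sup x y) := calc
  KOps.sup (KOps.sup x y) (KOps.neg (KOps.sup x y))
      = KOps.sup y (KOps.sup x (meet (KOps.neg x) (KOps.neg y))) := by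
    rw [meet_neg_neg]; ac_rfl
  _ = KOps.sup x (KOps.sup y (KOps.neg y)) := by rw [sup_meet_neg]; ac_rfl
  _ = one := by rw [hy, hx.sup_one]

lemma meet_sup_self (hx : ExcludedMiddle x) (hy : ExcludedMiddle y) :
    meet x (KOps.sup x y) = x := by
  have h : KOps.sup (KOps.neg x) (KOps.sup x y) = one := by
    rw [← K3, K2 (KOps.neg x), hx, K2, hy.sup_one]
  rw [← K6, h, meet_comm, one_meet]

lemma sup_meet_self (hx : ExcludedMiddle x) (hy : ExcludedMiddle y) :
    KOps.sup x (meet x y) = x := by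
  have h := sup_meet_neg x (meet x y)
  rwa [← meet_assoc, meet_comm (KOps.neg x) x, hx.meet_neg_self, meet_comm, hy.meet_zero,
    sup_zero, eq_comm] at h

/-- `x ∧ (y ∨ z) ≤ (x ∧ y) ∨ (x ∧ z)`, reading `u ≤ v` as `u ∨ v = v`. -/
lemma meet_sup_le (ha : ExcludedMiddle x) (hyz : ExcludedMiddle (KOps.sup y z)) :
    KOps.sup (meet x (KOps.sup y z)) (KOps.sup (meet x y) (meet x z)) =
      KOps.sup (meet x y) (meet x z) := by
  apply sup_eq_right_of_meet_neg_eq_zero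
  calc _ = meet (KOps.sup y z) (meet x (KOps.neg (KOps.sup (meet x y) (meet x z)))) := by
        ac_rfl
    _ = meet x (meet (KOps.sup y z) (KOps.neg (KOps.sup y z))) := by
        rw [meet_neg_sup_meet]; ac_rfl
    _ = zero := by rw [hyz.meet_neg_self, ha.meet_zero]

end ExcludedMiddle

lemma J_sup_eq {x y : α} (hx : J x = x) (hy : J y = y) : J (sup x y) = sup x y := by
  set z := sup x y with hz
  have hJz_le : sup (J z) z = z := calc
    sup (J z) z = sup (sup x (J y)) y := by rw [K10, hz]; ac_rfl
    _ = z := by rw [hy, hz, K3, K1]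
  have hle_Jz : sup (J z) z = J z := by
    have h := (excludedMiddle_J z).sup_meet_self
      ((excludedMiddle_of_J_eq hx).sup (excludedMiddle_of_J_eq hy))
    rwa [meet_comm, K11] at h
  rw [← hle_Jz, hJz_le]

section Subalgebra

variable (p : α → Prop) (excludedMiddle_of_mem : ∀ {x}, p x → ExcludedMiddle x)
  (sup_mem : ∀ {x y}, p x → p y → p (sup x y)) (neg_mem : ∀ {x}, p x → p (neg x))
  (one_mem : p one)

abbrev subtypeBooleanAlgebra : BooleanAlgebra {x // p x} :=
  letI : Max {x // p x} := ⟨fun a b => ⟨sup a b, sup_mem a.2 b.2⟩⟩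
  letI : Min {x // p x} :=
    ⟨fun a b => ⟨meet a b, K5 a.1 b.1 ▸ neg_mem (sup_mem (neg_mem a.2) (neg_mem b.2))⟩⟩
  have em (a : {x // p x}) : ExcludedMiddle a.1 := excludedMiddle_of_mem a.2
  letI : Lattice {x // p x} := Lattice.mk'
    (fun a b => Subtype.ext (K2 a.1 b.1))
    (fun a b c => Subtype.ext (K3 a.1 b.1 c.1))
    (fun a b => Subtype.ext (meet_comm a.1 b.1))
    (fun a b c => Subtype.ext (meet_assoc a.1 b.1 c.1))
    (fun a b => Subtype.ext ((em a).sup_meet_self (em b)))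
    (fun a b => Subtype.ext ((em a).meet_sup_self (em b)))
  { DistribLattice.ofInfSupLe fun a b c =>
      sup_eq_right.1 (Subtype.ext ((em a).meet_sup_le (em (b ⊔ c)))) with
    compl := fun a => ⟨neg a, neg_mem a.2⟩
    top := ⟨one, one_mem⟩
    bot := ⟨zero, neg_one (α := α) ▸ neg_mem one_mem⟩
    le_top := fun a => sup_eq_right.1 (Subtype.ext (em a).sup_one)
    bot_le := fun a => sup_eq_right.1 (Subtype.ext (K7 a.1))
    inf_compl_le_bot := fun a => le_of_eq (Subtype.ext (em a).meet_neg_self)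
    top_le_sup_compl := fun a => le_of_eq (Subtype.ext (em a).symm) }

end Subalgebra

end KAlgebra

/-- If additionally J₂¬x = ¬J₂x, then O(A) = {x : J₂x = x} contains 1, is closed
under ¬ and ∨, and carries a Boolean algebra structure whose join, complement,
bottom and top are the operations induced from the K-algebra. -/
theorem stmt15 {α : Type*} [KOps α] [KAlgebra α]
    (hJ : ∀ x : α, J (neg x) = neg (J x)) :
    J (one : α) = one ∧
    (∀ x : α, J x = x → J (neg x) = neg x) ∧
    (∀ x y : α, J x = x → J y = y → J (sup x y) = sup x y) ∧
    ∃ B : BooleanAlgebra {x : α // J x = x},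
      (∀ a b : {x : α // J x = x}, ((B.sup a b : {x : α // J x = x}) : α) = sup (a : α) (b : α)) ∧
      (∀ a : {x : α // J x = x}, ((B.compl a : {x : α // J x = x}) : α) = neg (a : α)) ∧
      ((B.bot : {x : α // J x = x}) : α) = zero ∧
      ((B.top : {x : α // J x = x}) : α) = one := by
  have J_neg_eq {x : α} (hx : J x = x) : J (neg x) = neg x := by rw [hJ, hx]
  exact ⟨KAlgebra.J_one, fun _ => J_neg_eq, fun _ _ => KAlgebra.J_sup_eq,
    KAlgebra.subtypeBooleanAlgebra (fun x => J x = x) KAlgebra.excludedMiddle_of_J_eq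
      KAlgebra.J_sup_eq J_neg_eq KAlgebra.J_one,
    fun _ _ => rfl, fun _ => rfl, rfl, rfl⟩
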